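/- arXiv:2208.12130 — 2 statements merged into one kernel-verified Lean document; each statement's English description precedes it below -/
import Mathlib

section
/- Let V be a finite nonempty set with |V| = n, let Γ : V → ℕ, and let μ := (Σ_{v∈V} Γ(v))/n. If min_{v∈V} Γ(v) ≥ μ − 1, then the set S'(Γ) := {v ∈ V : Γ(v) ≤ ⌈μ⌋} satisfies |S'(Γ)| ≥ n/3. -/
/-- Rounding a real number to the nearest integer, ties rounded up: `⌈x⌋ := ⌈x - 1/2⌉`. -/
noncomputable def roundNear (x : ℝ) : ℤ := ⌈x - 1 / 2⌉

/-!
Deviations from the average load sum to zero. Vertices above `⌈μ⌋` exceed `μ` by at least `1/2`,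
while no vertex falls below `μ` by more than `1`, so the high vertices are at most twice as many
as the low ones.
-/

theorem add_half_le_of_roundNear_lt {x : ℝ} {k : ℤ} (hk : roundNear x < k) : x + 1 / 2 ≤ k := by
  have hceil : x - 1 / 2 ≤ roundNear x := Int.le_ceil _
  have hstep : (roundNear x : ℝ) + 1 ≤ k := by exact_mod_cast hk
  linarith

namespace Finset

variable {ι : Type*} (s : Finset ι) (x : ι → ℝ)

theorem sum_sub_sum_div_card : ∑ i ∈ s, (x i - (∑ j ∈ s, x j) / #s) = 0 := by
  rcases s.eq_empty_or_nonempty with rfl | hs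
  · simp
  · rw [sum_sub_distrib, sum_const, nsmul_eq_mul, mul_div_cancel₀ _ (by positivity), sub_self]

variable {x} (p : ι → Prop) [DecidablePred p] {a b : ℝ}

theorem mul_card_filter_not_le_mul_card_filter
    (hlow : ∀ i ∈ s, (∑ j ∈ s, x j) / #s - a ≤ x i)
    (hhigh : ∀ i ∈ s, ¬ p i → (∑ j ∈ s, x j) / #s + b ≤ x i) :
    b * #(s.filter fun i => ¬ p i) ≤ a * #(s.filter p) := by
  set μ := (∑ j ∈ s, x j) / #s
  have hP : -(a * #(s.filter p)) ≤ ∑ i ∈ s.filter p, (x i - μ) := by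
    rw [← neg_mul, mul_comm, ← nsmul_eq_mul, ← sum_const]
    exact sum_le_sum fun i hi => by linarith [hlow i (mem_filter.mp hi).1]
  have hnotP : b * #(s.filter fun i => ¬ p i) ≤ ∑ i ∈ s.filter (fun i => ¬ p i), (x i - μ) := by
    rw [mul_comm, ← nsmul_eq_mul, ← sum_const]
    exact sum_le_sum fun i hi => by
      obtain ⟨his, hpi⟩ := mem_filter.mp hi
      linarith [hhigh i his hpi]
  have hzero := sum_filter_add_sum_filter_not s p (fun i => x i - μ)
  rw [sum_sub_sum_div_card] at hzero
  linarith

end Finset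

theorem many_low_vertices_general {V : Type} [Fintype V] (Γ : V → ℕ)
    (h : ∀ v : V, (∑ u : V, (Γ u : ℝ)) / (Fintype.card V : ℝ) - 1 ≤ (Γ v : ℝ)) :
    (Fintype.card V : ℝ) / 3 ≤
      ((Finset.univ.filter fun v : V =>
        (Γ v : ℤ) ≤ roundNear ((∑ u : V, (Γ u : ℝ)) / (Fintype.card V : ℝ))).card : ℝ) := by
  set μ := (∑ u : V, (Γ u : ℝ)) / (Fintype.card V : ℝ)
  set low := fun v : V => (Γ v : ℤ) ≤ roundNear μ
  have hbalance : 1 / 2 * ((Finset.univ.filter fun v => ¬ low v).card : ℝ) ≤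
      1 * ((Finset.univ.filter low).card : ℝ) :=
    Finset.univ.mul_card_filter_not_le_mul_card_filter low (fun v _ => h v) fun v _ hv => by
      have hhigh := add_half_le_of_roundNear_lt (not_le.mp hv)
      rw [Int.cast_natCast] at hhigh
      exact hhigh
  have hcard : ((Finset.univ.filter low).card : ℝ) + (Finset.univ.filter fun v => ¬ low v).card =
      Fintype.card V := by exact_mod_cast Finset.card_filter_add_card_filter_not low
  linarith

/-- If every vertex of a finite nonempty set `V` carries at least `μ − 1` tokens, where
`μ = (Σ_v Γ(v))/|V|` is the average load, then at least a third of the vertices carry at most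
`⌈μ⌋` tokens. -/
theorem many_low_vertices {V : Type} [Fintype V] [Nonempty V] (Γ : V → ℕ)
    (h : ∀ v : V, (∑ u : V, (Γ u : ℝ)) / (Fintype.card V : ℝ) - 1 ≤ (Γ v : ℝ)) :
    (Fintype.card V : ℝ) / 3 ≤
      ((Finset.univ.filter fun v : V =>
        (Γ v : ℤ) ≤ roundNear ((∑ u : V, (Γ u : ℝ)) / (Fintype.card V : ℝ))).card : ℝ) :=
  many_low_vertices_general Γ h
end

section
/- Let G = (V, E) be a simple undirected graph and let v ∈ V be a vertex with deg(v) ≥ 1. Then ∏_{w ∈ N(v)} (1 − 1/(2·max{deg(w), deg(v)})) ≥ 1/2. -/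
/-!
Every neighbour `w` of `v` has `max (deg w) (deg v) ≥ deg v`, so each of the `deg v` factors is at
least `1 - 1/(2 deg v)`, and Bernoulli's inequality gives `(1 - 1/(2d))^d ≥ 1 - d/(2d) = 1/2`.
-/

open Finset

theorem one_half_le_one_sub_one_div_two_mul_pow (n : ℕ) :
    (1 : ℝ) / 2 ≤ (1 - 1 / (2 * n)) ^ n := by
  rcases n.eq_zero_or_pos with rfl | hn
  · norm_num
  have hn' : (1 : ℝ) ≤ n := by exact_mod_cast hn
  have hbernoulli := one_add_mul_le_pow (a := -(1 / (2 * (n : ℝ))))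
    (by rw [neg_le_neg_iff, div_le_iff₀ (by positivity)]; nlinarith) n
  calc (1 : ℝ) / 2 = 1 + n * -(1 / (2 * n)) := by field_simp; ring
    _ ≤ (1 + -(1 / (2 * n))) ^ n := hbernoulli
    _ = (1 - 1 / (2 * n)) ^ n := by rw [← sub_eq_add_neg]

theorem one_sub_one_div_two_mul_natCast_nonneg (n : ℕ) : (0 : ℝ) ≤ 1 - 1 / (2 * n) := by
  rcases n.eq_zero_or_pos with rfl | hn
  · norm_num
  have hn' : (1 : ℝ) ≤ n := by exact_mod_cast hn
  rw [sub_nonneg, div_le_one (by positivity)]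
  linarith

theorem one_sub_one_div_two_mul_le_of_le {a b : ℝ} (ha : 0 < a) (hab : a ≤ b) :
    1 - 1 / (2 * a) ≤ 1 - 1 / (2 * b) := by
  have := one_div_le_one_div_of_le (by positivity : 0 < 2 * a) (by linarith : 2 * a ≤ 2 * b)
  linarith

theorem neighbor_product_ge_half_general {V : Type} [Fintype V] (G : SimpleGraph V)
    [DecidableRel G.Adj] (v : V) :
    (1 : ℝ) / 2 ≤
      ∏ w ∈ G.neighborFinset v,
        (1 - 1 / (2 * (max (G.degree w) (G.degree v) : ℝ))) := by
  have hdeg_pos : ∀ w ∈ G.neighborFinset v, (0 : ℝ) < G.degree v := fun w hw => by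
    rw [← G.card_neighborFinset_eq_degree]
    exact_mod_cast card_pos.mpr ⟨w, hw⟩
  calc (1 : ℝ) / 2 ≤ (1 - 1 / (2 * G.degree v)) ^ G.degree v :=
        one_half_le_one_sub_one_div_two_mul_pow _
    _ = ∏ _w ∈ G.neighborFinset v, (1 - 1 / (2 * (G.degree v : ℝ))) := by
        rw [prod_const, G.card_neighborFinset_eq_degree]
    _ ≤ _ := prod_le_prod (fun _ _ => one_sub_one_div_two_mul_natCast_nonneg _) fun w hw =>
        one_sub_one_div_two_mul_le_of_le (hdeg_pos w hw) (le_max_right _ _)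

/-- For any vertex `v` of positive degree in a simple graph `G`,
`∏_{w ∈ N(v)} (1 − 1/(2·max{deg w, deg v})) ≥ 1/2`. -/
theorem neighbor_product_ge_half {V : Type} [Fintype V] (G : SimpleGraph V)
    [DecidableRel G.Adj] (v : V) (hv : 1 ≤ G.degree v) :
    (1 : ℝ) / 2 ≤
      ∏ w ∈ G.neighborFinset v,
        (1 - 1 / (2 * (max (G.degree w) (G.degree v) : ℝ))) :=
  neighbor_product_ge_half_general G v
end
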